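/- The function λ(y,·) is lower semicontinuous: for h : I → ℝ continuous and positive on a connected, locally connected space I, and C_{x,λ} the component of {h ≥ λ} containing x, the function z ↦ λ(y,z) := sup{λ ≤ min(h(y),h(z)) : C_{y,λ} = C_{z,λ}} satisfies liminf_{z → z_0} λ(y,z) ≥ λ(y,z_0) for every y, z_0 ∈ I. -/
import Mathlib


open Set

/-- `C_{x,λ}`: the connected component of `x` in `{y : h y ≥ λ}`. -/
def contourComp {I : Type*} [TopologicalSpace I] (h : I → ℝ) (x : I) (l : ℝ) : Set I :=
  connectedComponentIn {y | l ≤ h y} x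

/-- `λ(y,z) = sup{λ ≤ min(h y, h z) : C_{y,λ} = C_{z,λ}}`. -/
noncomputable def contourLam {I : Type*} [TopologicalSpace I] (h : I → ℝ) (y z : I) : ℝ :=
  sSup {l : ℝ | l ≤ min (h y) (h z) ∧ contourComp h y l = contourComp h z l}

/-- In the contour construction of an `ℝ`-tree — `I` connected and locally
connected, `h : I → ℝ` continuous and positive attaining its minimum at `v` — the function
`z ↦ λ(y,z)` is lower semicontinuous at every `z₀`:
`liminf_{z → z₀} λ(y,z) ≥ λ(y,z₀)`. -/
theorem contourLam_lowerSemicontinuous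
    {I : Type*} [TopologicalSpace I] [ConnectedSpace I] [LocallyConnectedSpace I]
    (h : I → ℝ) (hc : Continuous h) (hpos : ∀ x, 0 < h x)
    (v : I) (hmin : ∀ x, h v ≤ h x)
    (y z₀ : I) :
    LowerSemicontinuousAt (fun z => contourLam h y z) z₀ := by
  intro t ht
  have hne : (h v) ∈ {l : ℝ | l ≤ min (h y) (h z₀) ∧ contourComp h y l = contourComp h z₀ l} := by
    constructor
    · exact le_min (hmin y) (hmin z₀)
    · have huniv : {x | h v ≤ h x} = (univ : Set I) := eq_univ_of_forall hmin
      simp only [contourComp, huniv, connectedComponentIn_univ]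
      exact (PreconnectedSpace.connectedComponent_eq_univ y).trans (PreconnectedSpace.connectedComponent_eq_univ z₀).symm
  obtain ⟨l, ⟨hl1, hl2⟩, htl⟩ := exists_lt_of_lt_csSup ⟨h v, hne⟩ ht
  set l' : ℝ := (t + l) / 2 with hl'def
  have htl' : t < l' := by simp only [hl'def]; linarith
  have hl'l : l' < l := by simp only [hl'def]; linarith
  have hlz₀ : l ≤ h z₀ := le_trans hl1 (min_le_right _ _)
  have hly : l ≤ h y := le_trans hl1 (min_le_left _ _)
  -- z₀ belongs to C_{y,l'} = C_{z₀,l'}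
  have hz₀l : z₀ ∈ contourComp h z₀ l := mem_connectedComponentIn hlz₀
  have hz₀yl : z₀ ∈ contourComp h y l := hl2 ▸ hz₀l
  have hmono : contourComp h y l ⊆ contourComp h y l' :=
    connectedComponentIn_mono _ (fun x hx => le_trans hl'l.le hx)
  have hz₀yl' : z₀ ∈ contourComp h y l' := hmono hz₀yl
  have hcomp : contourComp h y l' = contourComp h z₀ l' :=
    connectedComponentIn_eq hz₀yl'
  -- the open component of z₀ in {l' < h}
  set U : Set I := connectedComponentIn {x | l' < h x} z₀ with hU
  have hUopen : IsOpen U := (isOpen_lt continuous_const hc).connectedComponentIn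
  have hz₀U : z₀ ∈ U := mem_connectedComponentIn (lt_of_lt_of_le hl'l hlz₀)
  have hUsub : U ⊆ contourComp h z₀ l' :=
    connectedComponentIn_mono _ (fun x (hx : l' < h x) => le_of_lt hx)
  filter_upwards [hUopen.mem_nhds hz₀U] with z hz
  have hzC : z ∈ contourComp h z₀ l' := hUsub hz
  have hzh : l' < h z := connectedComponentIn_subset {x | l' < h x} z₀ hz
  have hzeq : contourComp h z l' = contourComp h z₀ l' :=
    (connectedComponentIn_eq hzC).symm
  have hmem : l' ∈ {l : ℝ | l ≤ min (h y) (h z) ∧ contourComp h y l = contourComp h z l} :=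
    ⟨le_min (le_trans hl'l.le hly) hzh.le, hcomp.trans hzeq.symm⟩
  have hbdd : BddAbove {l : ℝ | l ≤ min (h y) (h z) ∧ contourComp h y l = contourComp h z l} :=
    ⟨min (h y) (h z), fun a ha => ha.1⟩
  exact lt_of_lt_of_le htl' (le_csSup hbdd hmem)
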